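/- Let a and b be finite-state automorphisms of the regular rooted d-ary tree T, each having a finite orbit-signalizer. Then a and b are conjugate in the full automorphism group Aut(T) if and only if they are conjugate in the group FR(X) of functionally recursive automorphisms. -/

import Mathlib

open List

/-- Vertices of the rooted `d`-ary tree `T`: finite words over the alphabet
`X = Fin d`. -/
abbrev Vertex (d : ℕ) := List (Fin d)

/-- `g` is an automorphism of the rooted `d`-ary tree: a bijection of the
vertex set `X*` preserving word length and the prefix relation. -/
def IsTreeAut {d : ℕ} (g : Equiv.Perm (Vertex d)) : Prop :=
  (∀ v : Vertex d, (g v).length = v.length) ∧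
    ∀ v w : Vertex d, g v <+: g (v ++ w)

theorem IsTreeAut.prefix_mono {d : ℕ} {g : Equiv.Perm (Vertex d)} (hg : IsTreeAut g)
    {u u' : Vertex d} (h : u <+: u') : g u <+: g u' := by
  obtain ⟨t, rfl⟩ := h
  exact hg.2 u t

/-- The automorphism group `Aut(T)` of the rooted `d`-ary tree, as a subgroup
of the group of permutations of the vertex set. -/
def treeAut (d : ℕ) : Subgroup (Equiv.Perm (Vertex d)) where
  carrier := {g | IsTreeAut g}
  one_mem' := ⟨fun _ => rfl, fun v w => ⟨w, rfl⟩⟩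
  mul_mem' := by
    intro g h hg hh
    obtain ⟨hg1, hg2⟩ := hg
    obtain ⟨hh1, hh2⟩ := hh
    refine ⟨fun v => ?_, fun v w => ?_⟩
    · simp [Equiv.Perm.mul_apply, hg1, hh1]
    · obtain ⟨t, ht⟩ := hh2 v w
      simp only [Equiv.Perm.mul_apply]
      rw [← ht]
      exact hg2 (h v) t
  inv_mem' := by
    intro g hgmem
    obtain ⟨hg1, hg2⟩ := hgmem
    have hg : IsTreeAut g := ⟨hg1, hg2⟩
    have hlen' : ∀ v : Vertex d, (g⁻¹ v).length = v.length := by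
      intro v
      conv_rhs => rw [← (show g (g⁻¹ v) = v from g.apply_symm_apply v)]
      rw [hg1]
    refine ⟨hlen', fun v w => ?_⟩
    have hle : (g⁻¹ v).length ≤ (g⁻¹ (v ++ w)).length := by
      have h1 := hlen' v
      have h2 := hlen' (v ++ w)
      rw [List.length_append] at h2
      omega
    have htp : (g⁻¹ (v ++ w)).take (g⁻¹ v).length <+: g⁻¹ (v ++ w) :=
      List.take_prefix _ _
    have hgtp : g ((g⁻¹ (v ++ w)).take (g⁻¹ v).length) <+: v ++ w := by
      have := hg.prefix_mono htp
      rwa [(show ∀ x, g (g⁻¹ x) = x from g.apply_symm_apply)] at this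
    have hlen_tp : (g ((g⁻¹ (v ++ w)).take (g⁻¹ v).length)).length = v.length := by
      rw [hg1, List.length_take, min_eq_left hle, hlen' v]
    have hveq : g ((g⁻¹ (v ++ w)).take (g⁻¹ v).length) = v := by
      have h1 := List.prefix_iff_eq_take.mp hgtp
      have h2 := List.prefix_iff_eq_take.mp (List.prefix_append v w)
      rw [h1, hlen_tp]
      exact h2.symm
    have hkey : (g⁻¹ (v ++ w)).take (g⁻¹ v).length = g⁻¹ v := by
      apply g.injective
      rw [hveq, (show ∀ x, g (g⁻¹ x) = x from g.apply_symm_apply)]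
    rw [← hkey]
    exact htp

open scoped Classical in
/-- The state (section) `g|_v` of `g` at the vertex `v` : the unique
automorphism satisfying `g (v ++ w) = g v ++ (g|_v) w` for all `w`. -/
noncomputable def state {d : ℕ} (g : Equiv.Perm (Vertex d)) (v : Vertex d) :
    Equiv.Perm (Vertex d) :=
  if h : Function.Bijective (fun w : Vertex d => (g (v ++ w)).drop v.length) then
    Equiv.ofBijective _ h
  else 1

/-- A finite-state automorphism: one having finitely many states.  The
finite-state automorphisms form the group `F(X)`. -/
def FiniteState {d : ℕ} (g : Equiv.Perm (Vertex d)) : Prop :=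
  (Set.range fun v : Vertex d => state g v).Finite

/-- The cardinality of the orbit `Orb_a(v)` of the vertex `v` under the cyclic
group generated by `a`. -/
noncomputable def orbitCard {d : ℕ} (a : Equiv.Perm (Vertex d)) (v : Vertex d) : ℕ :=
  Nat.card (Set.range fun n : ℤ => (a ^ n) v)

/-- The orbit-signalizer `OS(a) = { a^m|_v : v ∈ X^*, m = |Orb_a(v)| }`. -/
noncomputable def OS {d : ℕ} (a : Equiv.Perm (Vertex d)) : Set (Equiv.Perm (Vertex d)) :=
  {s | ∃ v : Vertex d, s = state (a ^ orbitCard a v) v}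

/-- `a` has finite orbit-signalizer. -/
def FiniteOS {d : ℕ} (a : Equiv.Perm (Vertex d)) : Prop := (OS a).Finite

/-- A self-similar (state-closed) subgroup. -/
def SelfSimilar {d : ℕ} (G : Subgroup (Equiv.Perm (Vertex d))) : Prop :=
  ∀ g ∈ G, ∀ v : Vertex d, state g v ∈ G

/-- A contracting group: there is a finite set `N ⊆ G` such that every
`g ∈ G` has all its states in `N` from some level on. -/
def ContractingGroup {d : ℕ} (G : Subgroup (Equiv.Perm (Vertex d))) : Prop :=
  ∃ N : Set (Equiv.Perm (Vertex d)), N.Finite ∧ N ⊆ (G : Set (Equiv.Perm (Vertex d))) ∧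
    ∀ g ∈ G, ∃ n : ℕ, ∀ v : Vertex d, n ≤ v.length → state g v ∈ N

/-- A contracting automorphism: the self-similar group generated by all of its
states is contracting. -/
def ContractingAut {d : ℕ} (f : Equiv.Perm (Vertex d)) : Prop :=
  ContractingGroup (Subgroup.closure (Set.range fun v : Vertex d => state f v))

/-- The activity sequence `θ_k(g)`: the number of vertices `v` of level `k`
whose state `g|_v` acts nontrivially on the first level `X`. -/
noncomputable def theta {d : ℕ} (g : Equiv.Perm (Vertex d)) (k : ℕ) : ℕ :=
  Nat.card {v : Vertex d // v.length = k ∧ ∃ x : Fin d, state g v [x] ≠ [x]}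

/-- A bounded automorphism: a finite-state automorphism with bounded activity
sequence.  The bounded automorphisms form the group `Pol(0)`. -/
def BoundedAut {d : ℕ} (g : Equiv.Perm (Vertex d)) : Prop :=
  FiniteState g ∧ ∃ C : ℕ, ∀ k : ℕ, theta g k ≤ C

/-- A polynomial automorphism (an element of `Pol(∞)`): a finite-state
automorphism whose activity sequence is polynomially bounded. -/
def PolyAut {d : ℕ} (g : Equiv.Perm (Vertex d)) : Prop :=
  FiniteState g ∧ ∃ p : Polynomial ℕ, ∀ k : ℕ, theta g k ≤ p.eval k

/-- A finitary automorphism (an element of `Pol(-1)`): all states at some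
level are trivial. -/
def Finitary {d : ℕ} (g : Equiv.Perm (Vertex d)) : Prop :=
  ∃ k : ℕ, ∀ v : Vertex d, v.length = k → state g v = 1

/-- A functionally recursive automorphism: a member of some finitely generated
self-similar subgroup of `Aut(T)`.  These form the group `FR(X)`. -/
def FunctionallyRecursive {d : ℕ} (g : Equiv.Perm (Vertex d)) : Prop :=
  ∃ G : Subgroup (Equiv.Perm (Vertex d)), G ≤ treeAut d ∧ SelfSimilar G ∧
    (∃ S : Set (Equiv.Perm (Vertex d)), S.Finite ∧ G = Subgroup.closure S) ∧ g ∈ G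

/-!
A conjugator `h` from `p` to `q` in `Aut(T)` is replaced by a canonical one `K(p, q)` built by
recursion. On the first level `K` acts like `h`. At a letter `x = p^j(r)`, where `r` is the chosen
representative of its `p`-orbit and `m` is the orbit length, the state of `K` is
`q^j|_{h r} · K(p^m|_r, q^m|_{h r}) · (p^j|_r)⁻¹`. The pairs `(p^m|_r, q^m|_{h r})` reached from
`(a, b)` stay in `OS(a) × OS(b)`, so only finitely many conjugators `K(p, q)` occur. Together with
the finitely many states of `a` and `b` they generate a self-similar group containing `K(a, b)`.
Checking that `K` conjugates `p` to `q` is a bisimulation argument: `K p^n` and `q^n K` agree on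
the first level, and at every letter their states are `u (K' P^e) v` and `u (Q^e K') v` for one
pair `(P, Q)` further down.
-/

namespace IsTreeAut

variable {d : ℕ} {g h : Equiv.Perm (Vertex d)}

theorem one : IsTreeAut (1 : Equiv.Perm (Vertex d)) := (treeAut d).one_mem

theorem mul (hg : IsTreeAut g) (hh : IsTreeAut h) : IsTreeAut (g * h) :=
  (treeAut d).mul_mem hg hh

theorem inv (hg : IsTreeAut g) : IsTreeAut g⁻¹ := (treeAut d).inv_mem hg

theorem zpow (hg : IsTreeAut g) (k : ℤ) : IsTreeAut (g ^ k) := (treeAut d).zpow_mem hg k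

theorem pow (hg : IsTreeAut g) (n : ℕ) : IsTreeAut (g ^ n) := (treeAut d).pow_mem hg n

theorem length_apply (hg : IsTreeAut g) (v : Vertex d) : (g v).length = v.length := hg.1 v

theorem apply_nil (hg : IsTreeAut g) : g [] = [] :=
  List.eq_nil_of_length_eq_zero (hg.length_apply [])

theorem exists_apply_singleton (hg : IsTreeAut g) (x : Fin d) : ∃ y, g [x] = [y] :=
  List.length_eq_one_iff.1 (hg.length_apply [x])

theorem apply_append_eq_append_drop (hg : IsTreeAut g) (v w : Vertex d) :
    g (v ++ w) = g v ++ (g (v ++ w)).drop v.length := by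
  conv_rhs => rw [← hg.length_apply v]
  exact (List.prefix_iff_eq_append.1 (hg.2 v w)).symm

theorem bijective_drop_apply_append (hg : IsTreeAut g) (v : Vertex d) :
    Function.Bijective fun w : Vertex d => (g (v ++ w)).drop v.length := by
  refine ⟨fun w w' hww' => ?_, fun u => ⟨(g⁻¹ (g v ++ u)).drop v.length, ?_⟩⟩
  · have h := congrArg (g v ++ ·) hww'
    simp only [← hg.apply_append_eq_append_drop] at h
    exact List.append_cancel_left (g.injective h)
  · have h := hg.inv.apply_append_eq_append_drop (g v) u
    rw [show g⁻¹ (g v) = v from g.symm_apply_apply v, hg.length_apply] at h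
    change (g (v ++ _)).drop v.length = u
    rw [← h, show g (g⁻¹ (g v ++ u)) = g v ++ u from g.apply_symm_apply _, ← hg.length_apply v,
      List.drop_left]

theorem state_apply (hg : IsTreeAut g) (v w : Vertex d) :
    state g v w = (g (v ++ w)).drop v.length := by
  rw [state, dif_pos (hg.bijective_drop_apply_append v)]
  rfl

theorem apply_append (hg : IsTreeAut g) (v w : Vertex d) :
    g (v ++ w) = g v ++ state g v w := by
  rw [hg.state_apply, ← hg.apply_append_eq_append_drop]

theorem state_eq_of_apply_append (hg : IsTreeAut g) {v : Vertex d} {s : Equiv.Perm (Vertex d)}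
    (hs : ∀ w, g (v ++ w) = g v ++ s w) : state g v = s := by
  ext w : 1
  exact List.append_cancel_left ((hg.apply_append v w).symm.trans (hs w))

theorem _root_.state_one (v : Vertex d) : state (1 : Equiv.Perm (Vertex d)) v = 1 :=
  one.state_eq_of_apply_append fun _ => rfl

theorem state_apply_append (hg : IsTreeAut g) (v w w' : Vertex d) :
    state g v (w ++ w') = state g v w ++ state g (v ++ w) w' := by
  have h := hg.apply_append v (w ++ w')
  rw [← List.append_assoc, hg.apply_append (v ++ w), hg.apply_append v, List.append_assoc] at h
  exact (List.append_cancel_left h).symm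

theorem isTreeAut_state (hg : IsTreeAut g) (v : Vertex d) : IsTreeAut (state g v) := by
  refine ⟨fun w => ?_, fun w w' => ?_⟩
  · rw [hg.state_apply, List.length_drop, hg.length_apply, List.length_append]
    omega
  · rw [hg.state_apply_append]
    exact List.prefix_append _ _

theorem state_nil (hg : IsTreeAut g) : state g [] = g :=
  hg.state_eq_of_apply_append fun w => by rw [hg.apply_nil]; rfl

theorem state_append (hg : IsTreeAut g) (u v : Vertex d) :
    state g (u ++ v) = state (state g u) v :=
  hg.state_eq_of_apply_append fun w => by
    rw [List.append_assoc, hg.apply_append, (hg.isTreeAut_state u).apply_append, hg.apply_append,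
      List.append_assoc]

theorem state_mul (hg : IsTreeAut g) (hh : IsTreeAut h) (v : Vertex d) :
    state (g * h) v = state g (h v) * state h v :=
  (hg.mul hh).state_eq_of_apply_append fun w => by
    simp only [Equiv.Perm.mul_apply, hh.apply_append, hg.apply_append]

theorem state_inv (hg : IsTreeAut g) (v : Vertex d) :
    state g⁻¹ v = (state g (g⁻¹ v))⁻¹ := by
  have h := hg.state_mul hg.inv v
  rw [mul_inv_cancel, state_one] at h
  exact eq_inv_of_mul_eq_one_right h.symm

theorem state_zpow_add (hg : IsTreeAut g) (k l : ℤ) (v : Vertex d) :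
    state (g ^ (k + l)) v = state (g ^ k) ((g ^ l) v) * state (g ^ l) v := by
  rw [zpow_add, (hg.zpow k).state_mul (hg.zpow l)]

theorem state_zpow_of_apply_eq (hg : IsTreeAut g) {v : Vertex d} (hv : g v = v) (k : ℤ) :
    state (g ^ k) v = state g v ^ k := by
  induction k using Int.induction_on with
  | zero => rw [zpow_zero, zpow_zero, state_one]
  | succ n ih => rw [zpow_add_one, (hg.zpow n).state_mul hg, hv, ih, zpow_add_one]
  | pred n ih =>
    have hv' : g⁻¹ v = v := Equiv.Perm.inv_eq_iff_eq.2 hv.symm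
    rw [zpow_sub_one, (hg.zpow _).state_mul hg.inv, hg.state_inv, hv', ih, zpow_sub_one]

theorem state_pow_of_apply_eq (hg : IsTreeAut g) {v : Vertex d} (hv : g v = v) (n : ℕ) :
    state (g ^ n) v = state g v ^ n := by
  exact_mod_cast hg.state_zpow_of_apply_eq hv n

theorem state_zpow_add_mul (hg : IsTreeAut g) {m : ℕ} {v : Vertex d} (hv : (g ^ m) v = v)
    (k e : ℤ) : state (g ^ (k + m * e)) v = state (g ^ k) v * state (g ^ m) v ^ e := by
  have hv' : (g ^ ((m : ℤ) * e)) v = v := by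
    rw [zpow_mul, zpow_natCast]
    exact Equiv.Perm.zpow_apply_eq_self_of_apply_eq_self hv e
  rw [hg.state_zpow_add, hv', zpow_mul, zpow_natCast, (hg.pow m).state_zpow_of_apply_eq hv]

theorem semiconjBy_state {p q : Equiv.Perm (Vertex d)} (hh : IsTreeAut h) (hp : IsTreeAut p)
    (hq : IsTreeAut q) (hc : SemiconjBy h p q) {v : Vertex d} (hv : p v = v) :
    SemiconjBy (state h v) (state p v) (state q (h v)) := by
  unfold SemiconjBy
  simpa only [hh.state_mul hp, hq.state_mul hh, hv] using congrArg (state · v) hc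

theorem state_zpow_mem_closure (hg : IsTreeAut g) (k : ℤ) (v : Vertex d) :
    state (g ^ k) v ∈ Subgroup.closure (Set.range (state g)) := by
  induction k using Int.induction_on generalizing v with
  | zero => rw [zpow_zero, state_one]; exact one_mem _
  | succ n ih =>
    rw [zpow_add_one, (hg.zpow _).state_mul hg]
    exact mul_mem (ih _) (Subgroup.subset_closure ⟨v, rfl⟩)
  | pred n ih =>
    rw [zpow_sub_one, (hg.zpow _).state_mul hg.inv, hg.state_inv]
    exact mul_mem (ih _) (inv_mem (Subgroup.subset_closure ⟨_, rfl⟩))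

end IsTreeAut

theorem treeAut_eq_of_bisimulation {d : ℕ}
    {R : Equiv.Perm (Vertex d) → Equiv.Perm (Vertex d) → Prop}
    (hR : ∀ g g', R g g' → IsTreeAut g ∧ IsTreeAut g' ∧ ∀ x : Fin d, g [x] = g' [x] ∧
      ∃ u v g₀ g₀', IsTreeAut v ∧ R g₀ g₀' ∧ state g [x] = u * g₀ * v ∧
        state g' [x] = u * g₀' * v)
    {g g' : Equiv.Perm (Vertex d)} (h : R g g') : g = g' := by
  suffices key : ∀ n (w : Vertex d), w.length = n → ∀ g g', R g g' → g w = g' w from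
    Equiv.ext fun w => key _ w rfl g g' h
  intro n
  induction n with
  | zero =>
    intro w hw g g' hgg'
    obtain ⟨hg, hg', -⟩ := hR g g' hgg'
    rw [List.eq_nil_of_length_eq_zero hw, hg.apply_nil, hg'.apply_nil]
  | succ n ih =>
    rintro (_ | ⟨x, w⟩) hw g g' hgg'
    · cases hw
    obtain ⟨hg, hg', hstep⟩ := hR g g' hgg'
    obtain ⟨hx, u, v, g₀, g₀', hv, h₀, hs, hs'⟩ := hstep x
    rw [← List.singleton_append, hg.apply_append, hg'.apply_append, hx, hs, hs']
    simp only [Equiv.Perm.mul_apply]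
    rw [ih _ (by rw [hv.length_apply]; simpa using hw) _ _ h₀]

section OrbitSignalizer

variable {d : ℕ} {a p : Equiv.Perm (Vertex d)}

theorem orbitCard_eq_minimalPeriod (g : Equiv.Perm (Vertex d)) (v : Vertex d) :
    orbitCard g v = Function.minimalPeriod g v := by
  have h : Set.range (fun n : ℤ => (g ^ n) v) = MulAction.orbit (Subgroup.zpowers g) v := by
    ext u
    simp [MulAction.mem_orbit_iff, Subgroup.smul_def, Equiv.Perm.smul_def]
  rw [orbitCard, h, Nat.card_congr (MulAction.orbitZPowersEquiv g v), Nat.card_zmod]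
  rfl

theorem zpow_apply_eq_self_iff (g : Equiv.Perm (Vertex d)) (v : Vertex d) (k : ℤ) :
    (g ^ k) v = v ↔ (orbitCard g v : ℤ) ∣ k := by
  rw [orbitCard_eq_minimalPeriod]
  exact MulAction.zpow_smul_eq_iff_minimalPeriod_dvd (a := g) (b := v)

theorem pow_apply_eq_self_iff (g : Equiv.Perm (Vertex d)) (v : Vertex d) (n : ℕ) :
    (g ^ n) v = v ↔ orbitCard g v ∣ n := by
  rw [orbitCard_eq_minimalPeriod]
  exact MulAction.pow_smul_eq_iff_minimalPeriod_dvd (a := g) (b := v)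

theorem pow_orbitCard_apply (g : Equiv.Perm (Vertex d)) (v : Vertex d) :
    (g ^ orbitCard g v) v = v :=
  (pow_apply_eq_self_iff g v _).2 dvd_rfl

theorem orbitCard_apply_of_semiconjBy {h q : Equiv.Perm (Vertex d)} (hc : SemiconjBy h p q)
    (v : Vertex d) : orbitCard q (h v) = orbitCard p v := by
  refine Nat.dvd_right_iff_eq.1 fun n => ?_
  rw [← pow_apply_eq_self_iff, ← pow_apply_eq_self_iff, ← Equiv.Perm.mul_apply,
    ← (hc.pow_right n).eq, Equiv.Perm.mul_apply, h.injective.eq_iff]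

theorem IsTreeAut.orbitCard_nil (ha : IsTreeAut a) : orbitCard a [] = 1 := by
  rw [orbitCard_eq_minimalPeriod, Function.minimalPeriod_eq_one_iff_isFixedPt]
  exact ha.apply_nil

theorem IsTreeAut.orbitCard_append (ha : IsTreeAut a) (v w : Vertex d) :
    orbitCard a (v ++ w) = orbitCard a v * orbitCard (state (a ^ orbitCard a v) v) w := by
  set M := orbitCard a v
  set m := orbitCard (state (a ^ M) v) w
  have hstate : ∀ t : ℕ, state (a ^ (M * t)) v = state (a ^ M) v ^ t := fun t => by
    rw [pow_mul, (ha.pow M).state_pow_of_apply_eq (pow_orbitCard_apply a v)]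
  have key : ∀ k : ℕ, (a ^ k) (v ++ w) = v ++ w ↔ M * m ∣ k := fun k => by
    rw [(ha.pow k).apply_append]
    constructor
    · intro hk
      obtain ⟨hv, hw⟩ := List.append_inj hk ((ha.pow k).length_apply v)
      obtain ⟨t, rfl⟩ := (pow_apply_eq_self_iff a v k).1 hv
      rw [hstate] at hw
      exact mul_dvd_mul_left M ((pow_apply_eq_self_iff _ w t).1 hw)
    · rintro ⟨t, rfl⟩
      rw [mul_assoc, hstate, (pow_apply_eq_self_iff _ w _).2 (dvd_mul_right m t),
        (pow_apply_eq_self_iff a v _).2 (dvd_mul_right M _)]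
  exact Nat.dvd_antisymm ((pow_apply_eq_self_iff a _ _).1 ((key _).2 dvd_rfl))
    ((key _).1 (pow_orbitCard_apply a _))

theorem IsTreeAut.self_mem_OS (ha : IsTreeAut a) : a ∈ OS a :=
  ⟨[], by rw [ha.orbitCard_nil, pow_one, ha.state_nil]⟩

theorem IsTreeAut.OS_subset_OS (ha : IsTreeAut a) (hp : p ∈ OS a) : OS p ⊆ OS a := by
  rintro _ ⟨w, rfl⟩
  obtain ⟨v, rfl⟩ := hp
  refine ⟨v ++ w, ?_⟩
  rw [ha.orbitCard_append, pow_mul, ((ha.pow _).pow _).state_append,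
    (ha.pow _).state_pow_of_apply_eq (pow_orbitCard_apply a v)]

theorem IsTreeAut.state_zpow_mem_closure_of_mem_OS (ha : IsTreeAut a) (hp : p ∈ OS a) (k : ℤ)
    (w : Vertex d) : state (p ^ k) w ∈ Subgroup.closure (Set.range (state a)) := by
  obtain ⟨v, rfl⟩ := hp
  rw [← (ha.pow _).state_zpow_of_apply_eq (pow_orbitCard_apply a v), ← zpow_natCast, ← zpow_mul,
    ← (ha.zpow _).state_append]
  exact ha.state_zpow_mem_closure _ _

end OrbitSignalizer

/-- A system `g i (x :: w) = root i [x] ++ left i x (g (next i x) (right i x w))`: its solution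
`toPerm` acts on the first level as `root i`, with states
`state (g i) [x] = left i x * g (next i x) * right i x`. -/
structure WreathRecursion (d : ℕ) (ι : Type*) where
  root : ι → Equiv.Perm (Vertex d)
  next : ι → Fin d → ι
  left : ι → Fin d → Equiv.Perm (Vertex d)
  right : ι → Fin d → Equiv.Perm (Vertex d)
  isTreeAut_root : ∀ i, IsTreeAut (root i)
  isTreeAut_left : ∀ i x, IsTreeAut (left i x)
  isTreeAut_right : ∀ i x, IsTreeAut (right i x)

namespace WreathRecursion

variable {d : ℕ} {ι : Type*} (W : WreathRecursion d ι)

theorem length_right (i : ι) (x : Fin d) (w : Vertex d) : (W.right i x w).length = w.length :=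
  (W.isTreeAut_right i x).length_apply w

def fn : ι → Vertex d → Vertex d
  | _, [] => []
  | i, x :: w => W.root i [x] ++ W.left i x (fn (W.next i x) (W.right i x w))
termination_by _ v => v.length
decreasing_by simp [length_right]

theorem fn_nil (i : ι) : W.fn i [] = [] := by rw [fn]

theorem fn_cons (i : ι) (x : Fin d) (w : Vertex d) :
    W.fn i (x :: w) = W.root i [x] ++ W.left i x (W.fn (W.next i x) (W.right i x w)) := by
  rw [fn]

theorem length_fn : ∀ (i : ι) (v : Vertex d), (W.fn i v).length = v.length
  | i, [] => by rw [fn_nil]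
  | i, x :: w => by
    rw [fn_cons, List.length_append, (W.isTreeAut_root i).length_apply,
      (W.isTreeAut_left i x).length_apply, length_fn, length_right, List.length_singleton,
      List.length_cons, Nat.add_comm]
termination_by _ v => v.length
decreasing_by simp [length_right]

theorem fn_prefix : ∀ (i : ι) (v w : Vertex d), W.fn i v <+: W.fn i (v ++ w)
  | _, [], _ => by rw [fn_nil]; exact List.nil_prefix
  | i, x :: v, w => by
    rw [List.cons_append, fn_cons, fn_cons, (W.isTreeAut_right i x).apply_append]
    exact (List.prefix_append_right_inj _).2
      ((W.isTreeAut_left i x).prefix_mono (fn_prefix _ _ _))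
termination_by _ v => v.length
decreasing_by simp [length_right]

theorem eq_of_fn_eq : ∀ (i : ι) (v v' : Vertex d), W.fn i v = W.fn i v' → v = v'
  | _, [], [], _ => rfl
  | i, [], _ :: _, h | i, _ :: _, [], h => by simpa [length_fn] using congrArg List.length h
  | i, x :: w, x' :: w', h => by
    rw [fn_cons, fn_cons] at h
    obtain ⟨hx, hw⟩ := List.append_inj h (by simp [(W.isTreeAut_root i).length_apply])
    obtain rfl : x = x' := List.head_eq_of_cons_eq ((W.root i).injective hx)
    rw [(W.right i x).injective (eq_of_fn_eq _ _ _ ((W.left i x).injective hw))]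
termination_by _ v => v.length
decreasing_by simp [length_right]

theorem exists_fn_eq : ∀ (i : ι) (u : Vertex d), ∃ v, W.fn i v = u
  | i, [] => ⟨[], W.fn_nil i⟩
  | i, y :: u => by
    obtain ⟨x, hx⟩ := (W.isTreeAut_root i).inv.exists_apply_singleton y
    obtain ⟨v, hv⟩ := exists_fn_eq (W.next i x) ((W.left i x)⁻¹ u)
    refine ⟨x :: (W.right i x)⁻¹ v, ?_⟩
    rw [fn_cons, ← Equiv.Perm.inv_eq_iff_eq.1 hx]
    simp [hv]
termination_by _ u => u.length
decreasing_by rw [(W.isTreeAut_left i x).inv.length_apply]; simp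

noncomputable def toPerm (i : ι) : Equiv.Perm (Vertex d) :=
  Equiv.ofBijective (W.fn i) ⟨fun _ _ => W.eq_of_fn_eq i _ _, W.exists_fn_eq i⟩

theorem toPerm_apply (i : ι) (v : Vertex d) : W.toPerm i v = W.fn i v := rfl

theorem isTreeAut_toPerm (i : ι) : IsTreeAut (W.toPerm i) := ⟨W.length_fn i, W.fn_prefix i⟩

theorem toPerm_apply_singleton (i : ι) (x : Fin d) : W.toPerm i [x] = W.root i [x] := by
  rw [toPerm_apply, fn_cons, (W.isTreeAut_right i x).apply_nil, fn_nil,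
    (W.isTreeAut_left i x).apply_nil, List.append_nil]

theorem state_toPerm_singleton (i : ι) (x : Fin d) :
    state (W.toPerm i) [x] = W.left i x * W.toPerm (W.next i x) * W.right i x :=
  (W.isTreeAut_toPerm i).state_eq_of_apply_append fun w => by
    rw [toPerm_apply_singleton, toPerm_apply, List.singleton_append, fn_cons]
    rfl

end WreathRecursion

noncomputable def cycleRep {α : Type*} (g : Equiv.Perm α) (z : α) : α :=
  (⟦z⟧ : Quotient (Equiv.Perm.SameCycle.setoid g)).out

theorem sameCycle_cycleRep {α : Type*} (g : Equiv.Perm α) (z : α) :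
    g.SameCycle (cycleRep g z) z :=
  Quotient.mk_out (s := Equiv.Perm.SameCycle.setoid g) z

theorem cycleRep_zpow_apply {α : Type*} (g : Equiv.Perm α) (k : ℤ) (z : α) :
    cycleRep g ((g ^ k) z) = cycleRep g z :=
  congrArg Quotient.out (Quotient.sound (Equiv.Perm.sameCycle_zpow_left.2 (.refl g z)))

def ConjPair (d : ℕ) : Type :=
  {pq : Equiv.Perm (Vertex d) × Equiv.Perm (Vertex d) //
    IsTreeAut pq.1 ∧ ∃ h, IsTreeAut h ∧ SemiconjBy h pq.1 pq.2}

namespace ConjPair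

variable {d : ℕ} (c : ConjPair d)

abbrev src : Equiv.Perm (Vertex d) := c.1.1

abbrev tgt : Equiv.Perm (Vertex d) := c.1.2

theorem isTreeAut_src : IsTreeAut c.src := c.2.1

noncomputable def conj : Equiv.Perm (Vertex d) := c.2.2.choose

theorem isTreeAut_conj : IsTreeAut c.conj := c.2.2.choose_spec.1

theorem semiconjBy_conj : SemiconjBy c.conj c.src c.tgt := c.2.2.choose_spec.2

theorem isTreeAut_tgt : IsTreeAut c.tgt := by
  rw [← mul_inv_cancel_right c.tgt c.conj, ← c.semiconjBy_conj.eq]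
  exact (c.isTreeAut_conj.mul c.isTreeAut_src).mul c.isTreeAut_conj.inv

theorem conj_zpow_apply (n : ℤ) (v : Vertex d) :
    c.conj ((c.src ^ n) v) = (c.tgt ^ n) (c.conj v) :=
  DFunLike.congr_fun (c.semiconjBy_conj.zpow_right n).eq v

noncomputable def signalizerAt (r : Vertex d) : ConjPair d :=
  ⟨(state (c.src ^ orbitCard c.src r) r, state (c.tgt ^ orbitCard c.src r) (c.conj r)),
    (c.isTreeAut_src.pow _).isTreeAut_state r, state c.conj r,
    c.isTreeAut_conj.isTreeAut_state r,
    c.isTreeAut_conj.semiconjBy_state (c.isTreeAut_src.pow _) (c.isTreeAut_tgt.pow _)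
      (c.semiconjBy_conj.pow_right _) (pow_orbitCard_apply _ _)⟩

noncomputable def rep (x : Fin d) : Vertex d := cycleRep c.src [x]

/-- Chosen arbitrarily, not reduced modulo the orbit length; `exists_add_pos_eq` controls the
ambiguity. -/
noncomputable def pos (x : Fin d) : ℤ := (sameCycle_cycleRep c.src [x]).choose

theorem zpow_pos_apply_rep (x : Fin d) : (c.src ^ c.pos x) (c.rep x) = [x] :=
  (sameCycle_cycleRep c.src [x]).choose_spec

noncomputable def wreath : WreathRecursion d (ConjPair d) where
  root c := c.conj
  next c x := c.signalizerAt (c.rep x)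
  left c x := state (c.tgt ^ c.pos x) (c.conj (c.rep x))
  right c x := (state (c.src ^ c.pos x) (c.rep x))⁻¹
  isTreeAut_root c := c.isTreeAut_conj
  isTreeAut_left c _ := (c.isTreeAut_tgt.zpow _).isTreeAut_state _
  isTreeAut_right c _ := ((c.isTreeAut_src.zpow _).isTreeAut_state _).inv

noncomputable def recConj : Equiv.Perm (Vertex d) := wreath.toPerm c

theorem isTreeAut_recConj : IsTreeAut c.recConj := wreath.isTreeAut_toPerm c

theorem recConj_apply_singleton (x : Fin d) : c.recConj [x] = c.conj [x] :=
  wreath.toPerm_apply_singleton c x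

theorem state_recConj_singleton (x : Fin d) :
    state c.recConj [x] = state (c.tgt ^ c.pos x) (c.conj (c.rep x)) *
      (c.signalizerAt (c.rep x)).recConj * (state (c.src ^ c.pos x) (c.rep x))⁻¹ :=
  wreath.state_toPerm_singleton c x

theorem recConj_mul_zpow_apply_singleton (n : ℤ) (x : Fin d) :
    (c.recConj * c.src ^ n) [x] = (c.tgt ^ n * c.recConj) [x] := by
  obtain ⟨x', hx'⟩ := (c.isTreeAut_src.zpow n).exists_apply_singleton x
  simp only [Equiv.Perm.mul_apply, recConj_apply_singleton, ← c.conj_zpow_apply, hx']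

theorem rep_eq_of_zpow_apply {n : ℤ} {x x' : Fin d} (hx' : (c.src ^ n) [x] = [x']) :
    c.rep x' = c.rep x := by
  rw [rep, ← hx', cycleRep_zpow_apply]
  rfl

theorem exists_add_pos_eq {n : ℤ} {x x' : Fin d} (hx' : (c.src ^ n) [x] = [x']) :
    ∃ e : ℤ, n + c.pos x = c.pos x' + orbitCard c.src (c.rep x) * e := by
  have hfix : (c.src ^ (n + c.pos x - c.pos x')) (c.rep x) = c.rep x := by
    apply (c.src ^ c.pos x').injective
    rw [← Equiv.Perm.mul_apply, ← zpow_add, add_sub_cancel, zpow_add, Equiv.Perm.mul_apply,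
      c.zpow_pos_apply_rep, hx', ← c.rep_eq_of_zpow_apply hx', c.zpow_pos_apply_rep]
  obtain ⟨e, he⟩ := (zpow_apply_eq_self_iff _ _ _).1 hfix
  exact ⟨e, by rw [← he]; ring⟩

theorem exists_state_recConj_mul_zpow (n : ℤ) (x : Fin d) :
    ∃ (e : ℤ) (u v : Equiv.Perm (Vertex d)), IsTreeAut v ∧
      state (c.recConj * c.src ^ n) [x] =
        u * ((c.signalizerAt (c.rep x)).recConj * (c.signalizerAt (c.rep x)).src ^ e) * v ∧
      state (c.tgt ^ n * c.recConj) [x] =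
        u * ((c.signalizerAt (c.rep x)).tgt ^ e * (c.signalizerAt (c.rep x)).recConj) * v := by
  have hp := c.isTreeAut_src
  have hq := c.isTreeAut_tgt
  obtain ⟨x', hx'⟩ := (hp.zpow n).exists_apply_singleton x
  obtain ⟨e, hn⟩ := c.exists_add_pos_eq hx'
  have hsrc : state (c.src ^ n) [x] = state (c.src ^ c.pos x') (c.rep x) *
      (c.signalizerAt (c.rep x)).src ^ e * (state (c.src ^ c.pos x) (c.rep x))⁻¹ := by
    rw [eq_mul_inv_iff_mul_eq, ← c.zpow_pos_apply_rep x, ← hp.state_zpow_add, hn,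
      hp.state_zpow_add_mul (pow_orbitCard_apply _ _)]
    rfl
  have htgt : state (c.tgt ^ n) (c.conj [x]) * state (c.tgt ^ c.pos x) (c.conj (c.rep x)) =
      state (c.tgt ^ c.pos x') (c.conj (c.rep x)) * (c.signalizerAt (c.rep x)).tgt ^ e := by
    have hfix : (c.tgt ^ orbitCard c.src (c.rep x)) (c.conj (c.rep x)) = c.conj (c.rep x) := by
      rw [← zpow_natCast, ← c.conj_zpow_apply, zpow_natCast, pow_orbitCard_apply]
    rw [← c.zpow_pos_apply_rep x, c.conj_zpow_apply, ← hq.state_zpow_add, hn,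
      hq.state_zpow_add_mul hfix]
    rfl
  refine ⟨e, state (c.tgt ^ c.pos x') (c.conj (c.rep x)), (state (c.src ^ c.pos x) (c.rep x))⁻¹,
    ((hp.zpow _).isTreeAut_state _).inv, ?_, ?_⟩
  · rw [c.isTreeAut_recConj.state_mul (hp.zpow n), hx', state_recConj_singleton,
      c.rep_eq_of_zpow_apply hx', hsrc]
    group
  · rw [(hq.zpow n).state_mul c.isTreeAut_recConj, recConj_apply_singleton,
      state_recConj_singleton, ← mul_assoc, ← mul_assoc, htgt]
    group

theorem semiconjBy_recConj : SemiconjBy c.recConj c.src c.tgt := by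
  have key := treeAut_eq_of_bisimulation (R := fun g g' => ∃ (c : ConjPair d) (n : ℤ),
    g = c.recConj * c.src ^ n ∧ g' = c.tgt ^ n * c.recConj) ?_ ⟨c, 1, rfl, rfl⟩
  · simpa [SemiconjBy] using key
  rintro _ _ ⟨c, n, rfl, rfl⟩
  refine ⟨c.isTreeAut_recConj.mul (c.isTreeAut_src.zpow n),
    (c.isTreeAut_tgt.zpow n).mul c.isTreeAut_recConj, fun x => ?_⟩
  obtain ⟨e, u, v, hv, hs, hs'⟩ := c.exists_state_recConj_mul_zpow n x
  exact ⟨c.recConj_mul_zpow_apply_singleton n x, u, v, _, _, hv, ⟨_, e, rfl, rfl⟩, hs, hs'⟩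

end ConjPair

section FunctionallyRecursive

variable {d : ℕ} {a b : Equiv.Perm (Vertex d)}

theorem selfSimilar_closure {S : Set (Equiv.Perm (Vertex d))} (hS : ∀ s ∈ S, IsTreeAut s)
    (hstate : ∀ s ∈ S, ∀ x : Fin d, state s [x] ∈ Subgroup.closure S) :
    SelfSimilar (Subgroup.closure S) := by
  have hT : ∀ g ∈ Subgroup.closure S, IsTreeAut g := fun g hg =>
    (Subgroup.closure_le (treeAut d)).2 hS hg
  have hletter : ∀ g ∈ Subgroup.closure S, ∀ x : Fin d, state g [x] ∈ Subgroup.closure S := by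
    intro g hg
    induction hg using Subgroup.closure_induction with
    | mem s hs => exact hstate s hs
    | one => intro x; rw [state_one]; exact one_mem _
    | mul g h hg hh ihg ihh =>
      intro x
      obtain ⟨y, hy⟩ := (hT h hh).exists_apply_singleton x
      rw [(hT g hg).state_mul (hT h hh), hy]
      exact mul_mem (ihg y) (ihh x)
    | inv g hg ihg =>
      intro x
      obtain ⟨y, hy⟩ := (hT g hg).inv.exists_apply_singleton x
      rw [(hT g hg).state_inv, hy]
      exact inv_mem (ihg y)
  intro g hg v
  induction v generalizing g with
  | nil => rwa [(hT g hg).state_nil]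
  | cons x v ih =>
    rw [← List.singleton_append, (hT g hg).state_append]
    exact ih _ (hletter g hg x)

def frGenerators (a b : Equiv.Perm (Vertex d)) : Set (Equiv.Perm (Vertex d)) :=
  Set.range (state a) ∪ Set.range (state b) ∪
    ConjPair.recConj '' {c : ConjPair d | c.src ∈ OS a ∧ c.tgt ∈ OS b}

theorem finite_frGenerators (hfa : FiniteState a) (hfb : FiniteState b) (hoa : FiniteOS a)
    (hob : FiniteOS b) : (frGenerators a b).Finite :=
  (hfa.union hfb).union (((hoa.prod hob).preimage Subtype.val_injective.injOn).image _)

theorem isTreeAut_of_mem_frGenerators (ha : IsTreeAut a) (hb : IsTreeAut b) :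
    ∀ s ∈ frGenerators a b, IsTreeAut s := by
  rintro _ ((⟨v, rfl⟩ | ⟨v, rfl⟩) | ⟨c, -, rfl⟩)
  · exact ha.isTreeAut_state v
  · exact hb.isTreeAut_state v
  · exact c.isTreeAut_recConj

theorem state_mem_closure_frGenerators (ha : IsTreeAut a) (hb : IsTreeAut b) :
    ∀ s ∈ frGenerators a b, ∀ x : Fin d, state s [x] ∈ Subgroup.closure (frGenerators a b) := by
  have hA : Subgroup.closure (Set.range (state a)) ≤ Subgroup.closure (frGenerators a b) :=
    Subgroup.closure_mono fun _ hs => Or.inl (Or.inl hs)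
  have hB : Subgroup.closure (Set.range (state b)) ≤ Subgroup.closure (frGenerators a b) :=
    Subgroup.closure_mono fun _ hs => Or.inl (Or.inr hs)
  rintro _ ((⟨v, rfl⟩ | ⟨v, rfl⟩) | ⟨c, ⟨hca, hcb⟩, rfl⟩) x
  · rw [← ha.state_append]
    exact Subgroup.subset_closure (Or.inl (Or.inl ⟨_, rfl⟩))
  · rw [← hb.state_append]
    exact Subgroup.subset_closure (Or.inl (Or.inr ⟨_, rfl⟩))
  · have hnext : c.signalizerAt (c.rep x) ∈ {c : ConjPair d | c.src ∈ OS a ∧ c.tgt ∈ OS b} := by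
      refine ⟨ha.OS_subset_OS hca ⟨_, rfl⟩, hb.OS_subset_OS hcb ⟨c.conj (c.rep x), ?_⟩⟩
      rw [orbitCard_apply_of_semiconjBy c.semiconjBy_conj]
      rfl
    rw [c.state_recConj_singleton]
    exact mul_mem (mul_mem (hB (hb.state_zpow_mem_closure_of_mem_OS hcb _ _))
      (Subgroup.subset_closure (Or.inr ⟨_, hnext, rfl⟩)))
      (inv_mem (hA (ha.state_zpow_mem_closure_of_mem_OS hca _ _)))

theorem functionallyRecursive_recConj (ha : IsTreeAut a) (hb : IsTreeAut b)
    (hfa : FiniteState a) (hfb : FiniteState b) (hoa : FiniteOS a) (hob : FiniteOS b)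
    {c : ConjPair d} (hca : c.src ∈ OS a) (hcb : c.tgt ∈ OS b) :
    FunctionallyRecursive c.recConj :=
  ⟨_, (Subgroup.closure_le _).2 (isTreeAut_of_mem_frGenerators ha hb),
    selfSimilar_closure (isTreeAut_of_mem_frGenerators ha hb)
      (state_mem_closure_frGenerators ha hb),
    ⟨_, finite_frGenerators hfa hfb hoa hob, rfl⟩,
    Subgroup.subset_closure (Or.inr ⟨c, ⟨hca, hcb⟩, rfl⟩)⟩

end FunctionallyRecursive

theorem conj_in_AutT_iff_conj_in_FR_general
    (d : ℕ) (a b : Equiv.Perm (Vertex d))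
    (ha : IsTreeAut a) (hb : IsTreeAut b)
    (hfa : FiniteState a) (hfb : FiniteState b)
    (hoa : FiniteOS a) (hob : FiniteOS b) :
    (∃ h : Equiv.Perm (Vertex d), IsTreeAut h ∧ h * a * h⁻¹ = b) ↔
      (∃ h : Equiv.Perm (Vertex d), FunctionallyRecursive h ∧ h * a * h⁻¹ = b) := by
  constructor
  · rintro ⟨h, hh, hab⟩
    let c : ConjPair d := ⟨(a, b), ha, h, hh, mul_inv_eq_iff_eq_mul.1 hab⟩
    exact ⟨c.recConj, functionallyRecursive_recConj ha hb hfa hfb hoa hob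
      ha.self_mem_OS hb.self_mem_OS, mul_inv_eq_iff_eq_mul.2 c.semiconjBy_recConj⟩
  · rintro ⟨h, ⟨G, hG, -, -, hhG⟩, hab⟩
    exact ⟨h, hG hhG, hab⟩

/-- Two finite-state automorphisms `a, b` of the regular rooted
`d`-ary tree with finite orbit-signalizers are conjugate in `Aut(T)` if and only
if they are conjugate in the group `FR(X)` of functionally recursive
automorphisms. -/
theorem conj_in_AutT_iff_conj_in_FR
    (d : ℕ) (hd : 2 ≤ d) (a b : Equiv.Perm (Vertex d))
    (ha : IsTreeAut a) (hb : IsTreeAut b)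
    (hfa : FiniteState a) (hfb : FiniteState b)
    (hoa : FiniteOS a) (hob : FiniteOS b) :
    (∃ h : Equiv.Perm (Vertex d), IsTreeAut h ∧ h * a * h⁻¹ = b) ↔
      (∃ h : Equiv.Perm (Vertex d), FunctionallyRecursive h ∧ h * a * h⁻¹ = b) :=
  conj_in_AutT_iff_conj_in_FR_general d a b ha hb hfa hfb hoa hob
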